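/- arXiv:2510.15332 — 4 statements merged into one kernel-verified Lean document; each statement's English description precedes it below -/
import Mathlib

section
/- For every integer d ≥ 3 there exists a constant c_d > 0 such that for every prime power q and every integer ℓ ≥ c_d · log q, there exist homogeneous polynomials F1, …, Fℓ ∈ 𝔽_q[x,y,z], each of degree exactly d and each irreducible in K[x,y,z] for K the algebraic closure of 𝔽_q, such that the union over i of the 𝔽_q-points of the zero locus of F_i is a blocking set in ℙ²(𝔽_q). That is, there exists a blocking family of degree (d, d, …, d) (ℓ times) over 𝔽_q. -/
open MvPolynomial

/-- The set of `𝔽_q`-points of the plane projective curve `{f = 0}` in `ℙ²(𝔽_q)`. -/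
def projZeroSet {F : Type} [Field F] (f : MvPolynomial (Fin 3) F) :
    Set (Projectivization F (Fin 3 → F)) :=
  {P | ∀ (v : Fin 3 → F) (hv : v ≠ 0), Projectivization.mk F v hv = P →
    MvPolynomial.eval v f = 0}

/-- `B` is a blocking set in `ℙ²(𝔽_q)`: it meets every line `ax + by + cz = 0`. -/
def IsBlockingSet {F : Type} [Field F] (B : Set (Projectivization F (Fin 3 → F))) : Prop :=
  ∀ a b c : F, ¬(a = 0 ∧ b = 0 ∧ c = 0) →
    ∃ P ∈ B, P ∈ projZeroSet (C a * X 0 + C b * X 1 + C c * X 2)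

noncomputable section AuxBlocking

/-- The family of curves used in the construction. -/
def fpoly {K : Type} [Field K] (d : ℕ) (s : K) : MvPolynomial (Fin 3) K :=
  X 0 * X 2 ^ (d - 1) - X 1 ^ d - C s * (X 1 * X 2 ^ (d - 1))

section LinearIrred
open Polynomial

lemma linear_irred {R : Type*} [CommRing R] [IsDomain R] (a b : R) (ha : a ≠ 0)
    (h : ∀ r : R, r ∣ a → r ∣ b → IsUnit r) :
    Irreducible (Polynomial.C a * Polynomial.X - Polynomial.C b) := by
  set p : R[X] := Polynomial.C a * Polynomial.X - Polynomial.C b with hp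
  have hc1 : p.coeff 1 = a := by simp [hp]
  have hc0 : p.coeff 0 = -b := by simp [hp]
  have hp0 : p ≠ 0 := fun h0 => ha (by rw [h0] at hc1; simpa using hc1.symm)
  have hdeg : p.natDegree = 1 := by
    refine le_antisymm ((natDegree_sub_le _ _).trans (max_le ((natDegree_C_mul_le a X).trans (by simp)) (by simp)))
      (le_natDegree_of_ne_zero (hc1 ▸ ha))
  have hunit : ∀ w : R[X], w ∣ p → w.natDegree = 0 → IsUnit w := by
    intro w hw h0
    obtain ⟨g, hg⟩ := hw
    have hw' : w = Polynomial.C (w.coeff 0) := eq_C_of_natDegree_eq_zero h0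
    rw [hw'] at hg ⊢
    refine (isUnit_C).mpr (h _ ⟨g.coeff 1, ?_⟩ ?_)
    · rw [← hc1, hg, Polynomial.coeff_C_mul]
    · rw [← dvd_neg, ← hc0, hg]
      exact ⟨g.coeff 0, by rw [Polynomial.coeff_C_mul]⟩
  constructor
  · intro hu
    have := natDegree_eq_zero_of_isUnit hu
    omega
  · intro u v huv
    have hu0 : u ≠ 0 := fun h0 => hp0 (by simp [huv, h0])
    have hv0 : v ≠ 0 := fun h0 => hp0 (by simp [huv, h0])
    have hsum : u.natDegree + v.natDegree = 1 := by
      rw [← natDegree_mul hu0 hv0, ← huv, hdeg]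
    rcases Nat.eq_zero_or_pos u.natDegree with h0 | h1
    · exact Or.inl (hunit u ⟨v, huv⟩ h0)
    · exact Or.inr (hunit v ⟨u, by rw [huv, mul_comm]⟩ (by omega))

end LinearIrred

lemma coprime_aux {K : Type} [Field K] {n m : ℕ} (r : MvPolynomial (Fin 2) K)
    (hx : r ∣ X 0 ^ n) (hz : r ∣ X 1 ^ m) : IsUnit r := by
  let e := finSuccEquiv K 1
  have hx' : e r ∣ Polynomial.X ^ n := by
    have := map_dvd e hx
    rwa [map_pow, finSuccEquiv_X_zero] at this
  have hz' : e r ∣ Polynomial.C (X 0 ^ m : MvPolynomial (Fin 1) K) := by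
    have := map_dvd e hz
    rwa [map_pow, show ((1 : Fin 2)) = Fin.succ 0 from rfl, finSuccEquiv_X_succ, ← map_pow] at this
  obtain ⟨i, hi, u, hu⟩ := (dvd_prime_pow Polynomial.prime_X n).mp hx'
  rcases Nat.eq_zero_or_pos i with h0 | h1
  · subst h0
    have h1 : IsUnit (e r) := IsUnit.of_mul_eq_one (u : Polynomial (MvPolynomial (Fin 1) K)) (by simpa using hu)
    have := h1.map e.symm
    rwa [AlgEquiv.symm_apply_apply] at this
  · exfalso
    have hXi : Polynomial.X ∣ e r * (u : Polynomial (MvPolynomial (Fin 1) K)) := by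
      rw [hu]; exact dvd_pow_self _ (by omega)
    have hXd : Polynomial.X ∣ e r := (Units.dvd_mul_right).mp hXi
    have h2 : Polynomial.X ∣ Polynomial.C (X 0 ^ m : MvPolynomial (Fin 1) K) := hXd.trans hz'
    rw [Polynomial.X_dvd_iff, Polynomial.coeff_C] at h2
    simp at h2



lemma fpoly_homog {K : Type} [Field K] (d : ℕ) (hd : 3 ≤ d) (s : K) :
    (fpoly d s).IsHomogeneous d := by
  have h1 : 1 + (d - 1) = d := by omega
  have hA : (X (R := K) (0 : Fin 3) * X 2 ^ (d - 1)).IsHomogeneous d := by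
    have := (isHomogeneous_X K (0 : Fin 3)).mul (isHomogeneous_X_pow (R := K) (2 : Fin 3) (d - 1))
    rwa [h1] at this
  have hB : (X (R := K) (1 : Fin 3) ^ d).IsHomogeneous d := isHomogeneous_X_pow _ _
  have hC : (C s * (X (R := K) (1 : Fin 3) * X 2 ^ (d - 1))).IsHomogeneous d := by
    have := ((isHomogeneous_X K (1 : Fin 3)).mul
      (isHomogeneous_X_pow (R := K) (2 : Fin 3) (d - 1))).C_mul s
    rwa [h1] at this
  exact (hA.sub hB).sub hC

lemma fpoly_irred {K : Type} [Field K] (d : ℕ) (hd : 3 ≤ d) (s : K) :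
    Irreducible (fpoly d s) := by
  rw [← MulEquiv.irreducible_iff (finSuccEquiv K 2)]
  have heq : finSuccEquiv K 2 (fpoly d s) =
      Polynomial.C (X 1 ^ (d - 1) : MvPolynomial (Fin 2) K) * Polynomial.X -
      Polynomial.C (X 0 ^ d + C s * (X 0 * X 1 ^ (d - 1)) : MvPolynomial (Fin 2) K) := by
    simp only [fpoly, map_sub, map_mul, map_pow, finSuccEquiv_X_zero,
      show ((1 : Fin 3)) = Fin.succ 0 from rfl, show ((2 : Fin 3)) = Fin.succ 1 from rfl,
      finSuccEquiv_X_succ, show finSuccEquiv K 2 (C s) = Polynomial.C (C s) by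
        simp [finSuccEquiv_apply],
      Polynomial.C_add, Polynomial.C_mul, Polynomial.C_pow]
    ring
  rw [heq]
  apply linear_irred
  · exact pow_ne_zero _ (X_ne_zero _)
  · intro r h1 h2
    have h3 : r ∣ C s * (X 0 * X 1 ^ (d - 1)) := by
      rw [show (C s * (X 0 * X 1 ^ (d-1)) : MvPolynomial (Fin 2) K) = C s * X 0 * X 1 ^ (d-1) by ring]
      exact h1.mul_left _
    have h4 : r ∣ (X 0 ^ d : MvPolynomial (Fin 2) K) := by
      have := dvd_sub h2 h3
      rwa [add_sub_cancel_right] at this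
    exact coprime_aux r h4 h1


lemma fpoly_map {K L : Type} [Field K] [Field L] (φ : K →+* L) (d : ℕ) (s : K) :
    MvPolynomial.map φ (fpoly d s) = fpoly d (φ s) := by
  simp [fpoly, map_sub, map_mul, map_pow, map_C, map_X]

lemma eval_smul_of_homog {F : Type} [CommRing F] {f : MvPolynomial (Fin 3) F} {n : ℕ}
    (hf : f.IsHomogeneous n) (c : F) (v : Fin 3 → F) :
    eval (c • v) f = c ^ n * eval v f := by
  rw [eval_eq, eval_eq, Finset.mul_sum]
  refine Finset.sum_congr rfl fun m hm => ?_
  have hdeg : (Finsupp.weight 1) m = n := hf (mem_support_iff.mp hm)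
  have hsum : ∑ i ∈ m.support, m i = n := by
    rw [← hdeg, Finsupp.weight_apply, Finsupp.sum]
    simp
  calc coeff m f * ∏ i ∈ m.support, (c • v) i ^ m i
      = coeff m f * ∏ i ∈ m.support, c ^ m i * v i ^ m i := by
        simp [Pi.smul_apply, smul_eq_mul, mul_pow]
    _ = c ^ n * (coeff m f * ∏ i ∈ m.support, v i ^ m i) := by
        rw [Finset.prod_mul_distrib, Finset.prod_pow_eq_pow_sum, hsum]
        ring

lemma mem_projZeroSet {F : Type} [Field F] {f : MvPolynomial (Fin 3) F} {n : ℕ}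
    (hf : f.IsHomogeneous n) (v : Fin 3 → F) (hv : v ≠ 0) (hev : eval v f = 0) :
    Projectivization.mk F v hv ∈ projZeroSet f := by
  intro w hw hmk
  obtain ⟨a, ha⟩ := (Projectivization.mk_eq_mk_iff F w v hw hv).mp hmk
  rw [← ha, Units.smul_def, eval_smul_of_homog hf, hev, mul_zero]

lemma line_homog {F : Type} [Field F] (a b c : F) :
    (C a * X 0 + C b * X 1 + C c * X 2 : MvPolynomial (Fin 3) F).IsHomogeneous 1 :=
  ((isHomogeneous_C_mul_X a 0).add (isHomogeneous_C_mul_X b 1)).add (isHomogeneous_C_mul_X c 2)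

lemma eval_line {F : Type} [Field F] (a b c x y z : F) :
    eval ![x, y, z] (C a * X 0 + C b * X 1 + C c * X 2 : MvPolynomial (Fin 3) F)
      = a * x + b * y + c * z := by
  simp

section Counting
open Finset

lemma fiber_card {F : Type} [Field F] [Fintype F] [DecidableEq F] (d : ℕ) (hd : 3 ≤ d) (m β : F) :
    Fintype.card F - 1 ≤ d * ((univ : Finset F).filter fun s : F => ∃ t, t ^ d + (s - m) * t = β).card := by
  classical
  set ψ : F → F := fun t => (β - t ^ d) * t⁻¹ + m with hψ
  set T : Finset F := univ.erase 0 with hT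
  have himg : T.image ψ ⊆ (univ : Finset F).filter fun s : F => ∃ t, t ^ d + (s - m) * t = β := by
    intro s hs
    obtain ⟨t, ht, rfl⟩ := mem_image.mp hs
    have ht0 : t ≠ 0 := ne_of_mem_erase ht
    refine mem_filter.mpr ⟨mem_univ _, t, ?_⟩
    field_simp [hψ]
    simp only [hψ]
    rw [add_sub_cancel_right, mul_assoc, inv_mul_cancel₀ ht0]
    ring
  have hfib : ∀ s0 ∈ T.image ψ, (T.filter fun t => ψ t = s0).card ≤ d := by
    intro s0 _
    set p : Polynomial F := Polynomial.X ^ d + Polynomial.C (s0 - m) * Polynomial.X - Polynomial.C β with hp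
    have hpc : p.coeff d = 1 := by
      simp only [hp, Polynomial.coeff_sub, Polynomial.coeff_add, Polynomial.coeff_X_pow,
        Polynomial.coeff_C_mul, Polynomial.coeff_X, Polynomial.coeff_C]
      simp [show d ≠ 1 by omega, show d ≠ 0 by omega]
      exact fun h => absurd h (by omega)
    have hp0 : p ≠ 0 := fun h => by simp [h] at hpc
    have hdeg : p.natDegree ≤ d := by
      have h2 : (Polynomial.C (s0 - m) * Polynomial.X : Polynomial F).natDegree ≤ d :=
        (Polynomial.natDegree_C_mul_le _ _).trans (Polynomial.natDegree_X_le.trans (by omega))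
      have h1 := Polynomial.natDegree_add_le (Polynomial.X ^ d : Polynomial F)
        (Polynomial.C (s0 - m) * Polynomial.X)
      have h3 := Polynomial.natDegree_sub_le
        (Polynomial.X ^ d + Polynomial.C (s0 - m) * Polynomial.X) (Polynomial.C β : Polynomial F)
      rw [← hp] at h3
      simp only [Polynomial.natDegree_X_pow, Polynomial.natDegree_C] at h1 h3
      omega
    have hsub : T.filter (fun t => ψ t = s0) ⊆ p.roots.toFinset := by
      intro t ht
      obtain ⟨htT, hteq⟩ := mem_filter.mp ht
      have ht0 : t ≠ 0 := ne_of_mem_erase htT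
      rw [Multiset.mem_toFinset, Polynomial.mem_roots hp0]
      have : (s0 - m) * t = β - t ^ d := by
        rw [← hteq, hψ]
        field_simp
        ring
      simp only [Polynomial.IsRoot.def, hp, Polynomial.eval_sub, Polynomial.eval_add,
        Polynomial.eval_pow, Polynomial.eval_mul, Polynomial.eval_C, Polynomial.eval_X]
      rw [this]; ring
    calc (T.filter fun t => ψ t = s0).card ≤ p.roots.toFinset.card := card_le_card hsub
      _ ≤ Multiset.card p.roots := Multiset.toFinset_card_le _
      _ ≤ p.natDegree := Polynomial.card_roots' p
      _ ≤ d := hdeg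
  have hTcard : T.card = Fintype.card F - 1 := by
    rw [hT, card_erase_of_mem (mem_univ _), card_univ]
  calc Fintype.card F - 1 = T.card := hTcard.symm
    _ ≤ d * (T.image ψ).card := card_le_mul_card_image T d hfib
    _ ≤ d * ((univ : Finset F).filter fun s : F => ∃ t, t ^ d + (s - m) * t = β).card :=
        Nat.mul_le_mul_left d (card_le_card himg)


lemma counting {F : Type} [Field F] [Fintype F] (d ℓ : ℕ) (hd : 3 ≤ d)
    (hℓ : (5 * d : ℝ) * Real.log (Fintype.card F) ≤ (ℓ : ℝ)) :
    ∃ s : Fin ℓ → F, ∀ m β : F, ∃ i t, t ^ d + (s i - m) * t = β := by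
  classical
  set q := Fintype.card F with hq
  have hq2 : 2 ≤ q := Fintype.one_lt_card
  have hqR : (2 : ℝ) ≤ (q : ℝ) := by exact_mod_cast hq2
  have hlogq : 0 < Real.log q := Real.log_pos (by linarith)
  by_contra hcon
  push_neg at hcon
  set G : F → F → Finset F := fun m β => (univ : Finset F).filter
    (fun s : F => ∃ t, t ^ d + (s - m) * t = β) with hG
  -- covering
  have hcover : (univ : Finset (Fin ℓ → F)) ⊆ (univ : Finset (F × F)).biUnion
      (fun p => Fintype.piFinset fun _ : Fin ℓ => (G p.1 p.2)ᶜ) := by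
    intro s _
    obtain ⟨m, β, hmβ⟩ := hcon s
    refine mem_biUnion.mpr ⟨(m, β), mem_univ _, Fintype.mem_piFinset.mpr fun i => ?_⟩
    rw [mem_compl, hG, mem_filter]
    push_neg
    intro _
    intro t
    exact hmβ i t
  have hcard : q ^ ℓ ≤ ∑ p ∈ (univ : Finset (F × F)), (q - (G p.1 p.2).card) ^ ℓ := by
    calc q ^ ℓ = (univ : Finset (Fin ℓ → F)).card := by
          rw [card_univ, Fintype.card_fun]
          simp [hq]
      _ ≤ ((univ : Finset (F × F)).biUnion
            (fun p => Fintype.piFinset fun _ : Fin ℓ => (G p.1 p.2)ᶜ)).card :=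
          card_le_card hcover
      _ ≤ ∑ p ∈ (univ : Finset (F × F)), (Fintype.piFinset fun _ : Fin ℓ => (G p.1 p.2)ᶜ).card :=
          card_biUnion_le
      _ = ∑ p ∈ (univ : Finset (F × F)), (q - (G p.1 p.2).card) ^ ℓ := by
          refine Finset.sum_congr rfl fun p _ => ?_
          rw [Fintype.card_piFinset]
          simp [card_compl]
          rw [hq]
  -- real bounds
  set r : ℝ := 1 - 1 / (2 * d) with hr
  have hd0 : (0 : ℝ) < d := by positivity
  have hr0 : 0 ≤ r := by
    rw [hr]
    have : 1 / (2 * (d : ℝ)) ≤ 1 / 6 := by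
      apply div_le_div_of_nonneg_left <;> [norm_num; norm_num; (push_cast; linarith [show (3:ℝ) ≤ d by exact_mod_cast hd])]
    linarith
  have hterm : ∀ p : F × F, ((q - (G p.1 p.2).card : ℕ) : ℝ) ≤ (q : ℝ) * r := by
    intro p
    have hle : (G p.1 p.2).card ≤ q := by
      rw [hq, ← card_univ]; exact card_le_card (filter_subset _ _)
    have hfib : q - 1 ≤ d * (G p.1 p.2).card := fiber_card d hd p.1 p.2
    have h1 : ((q - 1 : ℕ) : ℝ) ≤ (d : ℝ) * (G p.1 p.2).card := by exact_mod_cast hfib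
    rw [Nat.cast_sub (by omega)] at h1
    push_cast at h1
    rw [Nat.cast_sub hle]
    have h2 : ((q : ℝ) - 1) / d ≤ (G p.1 p.2).card := by
      rw [div_le_iff₀ hd0]; linarith
    have h3 : (q : ℝ) / (2 * d) ≤ ((q : ℝ) - 1) / d := by
      rw [div_le_div_iff₀ (by positivity) hd0]
      ring_nf
      nlinarith
    have : (q : ℝ) * r = q - q / (2 * d) := by rw [hr]; ring
    rw [this]
    linarith
  have hreal : ((q : ℝ)) ^ ℓ ≤ (q : ℝ) ^ 2 * ((q : ℝ) * r) ^ ℓ := by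
    have h1 : ((q : ℝ)) ^ ℓ ≤ ∑ p ∈ (univ : Finset (F × F)), (((q - (G p.1 p.2).card : ℕ) : ℝ)) ^ ℓ := by
      have := hcard
      have : ((q ^ ℓ : ℕ) : ℝ) ≤ ((∑ p ∈ (univ : Finset (F × F)), (q - (G p.1 p.2).card) ^ ℓ : ℕ) : ℝ) := by
        exact_mod_cast hcard
      push_cast at this
      push_cast
      exact this
    have h2 : ∑ p ∈ (univ : Finset (F × F)), (((q - (G p.1 p.2).card : ℕ) : ℝ)) ^ ℓ ≤
        ∑ _p ∈ (univ : Finset (F × F)), ((q : ℝ) * r) ^ ℓ := by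
      refine Finset.sum_le_sum fun p _ => ?_
      exact pow_le_pow_left₀ (by positivity) (hterm p) ℓ
    have h3 : ∑ _p ∈ (univ : Finset (F × F)), ((q : ℝ) * r) ^ ℓ = (q : ℝ) ^ 2 * ((q : ℝ) * r) ^ ℓ := by
      rw [Finset.sum_const, card_univ, Fintype.card_prod, ← hq]
      push_cast
      ring
    calc ((q : ℝ)) ^ ℓ ≤ _ := h1
      _ ≤ _ := h2
      _ = _ := h3
  -- contradiction
  have hqpos : (0 : ℝ) < (q : ℝ) ^ ℓ := by positivity
  have hone : (1 : ℝ) ≤ (q : ℝ) ^ 2 * r ^ ℓ := by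
    rw [mul_pow] at hreal
    have := hreal
    rw [show (q : ℝ) ^ 2 * ((q:ℝ) ^ ℓ * r ^ ℓ) = (q:ℝ) ^ ℓ * ((q:ℝ) ^ 2 * r ^ ℓ) by ring] at this
    nlinarith
  have hlt : (q : ℝ) ^ 2 * r ^ ℓ < 1 := by
    have hrexp : r ≤ Real.exp (-(1 / (2 * d))) := by
      have := Real.add_one_le_exp (-(1 / (2 * (d : ℝ))))
      linarith
    have h4 : r ^ ℓ ≤ Real.exp (-(1 / (2 * d))) ^ ℓ := pow_le_pow_left₀ hr0 hrexp ℓ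
    have h5 : Real.exp (-(1 / (2 * (d : ℝ)))) ^ ℓ = Real.exp (-(ℓ / (2 * d))) := by
      rw [← Real.exp_nat_mul]
      congr 1
      ring
    have h6 : (q : ℝ) ^ 2 = Real.exp (2 * Real.log q) := by
      rw [show (2 : ℝ) * Real.log q = Real.log q + Real.log q by ring, Real.exp_add,
        Real.exp_log (by linarith : (0:ℝ) < (q:ℝ))]
      ring
    have hexpneg : 2 * Real.log q - (ℓ : ℝ) / (2 * d) < 0 := by
      rw [sub_neg, lt_div_iff₀ (by positivity : (0:ℝ) < 2 * (d:ℝ))]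
      nlinarith [hℓ, hlogq, show (3:ℝ) ≤ (d:ℝ) by exact_mod_cast hd]
    calc (q : ℝ) ^ 2 * r ^ ℓ
        ≤ Real.exp (2 * Real.log q) * Real.exp (-((ℓ : ℝ) / (2 * d))) := by
          rw [← h6]
          exact mul_le_mul_of_nonneg_left (h4.trans_eq h5) (by positivity)
      _ = Real.exp (2 * Real.log q - (ℓ : ℝ) / (2 * d)) := by
          rw [← Real.exp_add]; ring_nf
      _ < 1 := Real.exp_lt_one_iff.mpr hexpneg
  linarith

end Counting

end AuxBlocking

/-- For every `d ≥ 3` there is a constant `c_d > 0` such that for every prime power `q`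
and every `ℓ ≥ c_d · log q` there is a blocking family of `ℓ` geometrically irreducible
degree-`d` curves over `𝔽_q`. -/
theorem stmt2 (d : ℕ) (hd : 3 ≤ d) :
    ∃ c : ℝ, 0 < c ∧
      ∀ (F : Type) [Field F] [Fintype F],
        ∀ ℓ : ℕ, c * Real.log (Fintype.card F) ≤ (ℓ : ℝ) →
          ∃ f : Fin ℓ → MvPolynomial (Fin 3) F,
            (∀ i, (f i).IsHomogeneous d ∧
              Irreducible (MvPolynomial.map (algebraMap F (AlgebraicClosure F)) (f i))) ∧
            IsBlockingSet (⋃ i, projZeroSet (f i)) := by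
  refine ⟨5 * d, by positivity, ?_⟩
  intro F _ _ ℓ hℓ
  have hq2 : 2 ≤ Fintype.card F := Fintype.one_lt_card
  have hlogq : 0 < Real.log (Fintype.card F) := by
    apply Real.log_pos
    exact_mod_cast hq2
  have hd0 : (0 : ℝ) < (d : ℝ) := by
    have : (3 : ℝ) ≤ (d : ℝ) := by exact_mod_cast hd
    linarith
  have hℓ0 : 0 < ℓ := by
    rcases Nat.eq_zero_or_pos ℓ with h | h
    · exfalso
      subst h
      simp only [Nat.cast_zero] at hℓ
      nlinarith
    · exact h
  obtain ⟨s, hs⟩ := counting d ℓ hd hℓ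
  refine ⟨fun i => fpoly d (s i), fun i => ⟨fpoly_homog d hd _, ?_⟩, ?_⟩
  · rw [fpoly_map]
    exact fpoly_irred d hd _
  · intro a b c habc
    have hcurve : ∀ (i : Fin ℓ) (t : F),
        eval ![t ^ d + s i * t, t, 1] (fpoly d (s i)) = 0 := by
      intro i t
      simp [fpoly]
      try ring
    have hvne : ∀ (i : Fin ℓ) (t : F), (![t ^ d + s i * t, t, 1] : Fin 3 → F) ≠ 0 := by
      intro i t h
      have := congrFun h 2
      simp at this
    by_cases ha : a = 0
    · by_cases hb : b = 0
      · have hc : c ≠ 0 := fun h => habc ⟨ha, hb, h⟩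
        have hvinf : (![1, 0, 0] : Fin 3 → F) ≠ 0 := by
          intro h
          have := congrFun h 0
          simp at this
        refine ⟨Projectivization.mk F ![1, 0, 0] hvinf, Set.mem_iUnion.mpr ⟨⟨0, hℓ0⟩, ?_⟩, ?_⟩
        · refine mem_projZeroSet (fpoly_homog d hd _) _ _ ?_
          simp [fpoly, zero_pow (show d - 1 ≠ 0 by omega), zero_pow (show d ≠ 0 by omega)]
        · refine mem_projZeroSet (line_homog a b c) _ _ ?_
          rw [eval_line, ha]
          ring
      · set t : F := -c / b with htdef
        refine ⟨Projectivization.mk F ![t ^ d + s ⟨0, hℓ0⟩ * t, t, 1] (hvne _ t),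
          Set.mem_iUnion.mpr ⟨⟨0, hℓ0⟩, mem_projZeroSet (fpoly_homog d hd _) _ _ (hcurve _ t)⟩,
          mem_projZeroSet (line_homog a b c) _ _ ?_⟩
        rw [eval_line, ha, htdef]
        field_simp
        try ring
    · obtain ⟨i, t, ht⟩ := hs (-(b / a)) (-(c / a))
      refine ⟨Projectivization.mk F ![t ^ d + s i * t, t, 1] (hvne i t),
        Set.mem_iUnion.mpr ⟨i, mem_projZeroSet (fpoly_homog d hd _) _ _ (hcurve i t)⟩,
        mem_projZeroSet (line_homog a b c) _ _ ?_⟩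
      rw [eval_line]
      field_simp at ht
      linear_combination ht
end

section
/- Let G be a finite bipartite graph with parts A and B, with |A| ≥ 2, and suppose every vertex of A has degree at least δ, where δ ≥ 1. Then there exists a subset B' ⊆ B with |B'| ≤ ⌈|B| · (log |A|) / δ⌉ such that B' dominates A, i.e., for every a ∈ A there exists b ∈ B' adjacent to a. -/
open Finset

/-- Stein's covering lemma: in a finite bipartite graph with parts `A`, `B` where every
vertex of `A` has degree at least `δ ≥ 1` and `|A| ≥ 2`, there is a dominating set
`B' ⊆ B` of size at most `⌈|B| · log|A| / δ⌉`. -/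
theorem stmt6 (A B : Type) [Fintype A] [Fintype B] (E : A → B → Prop)
    (hA : 2 ≤ Fintype.card A) (δ : ℕ) (hδ : 1 ≤ δ)
    (hdeg : ∀ a : A, δ ≤ Nat.card {b : B // E a b}) :
    ∃ B' : Finset B,
      B'.card ≤ ⌈(Fintype.card B : ℝ) * Real.log (Fintype.card A) / (δ : ℝ)⌉₊ ∧
      ∀ a : A, ∃ b ∈ B', E a b := by
  classical
  set n := Fintype.card A with hn
  set m := Fintype.card B with hm
  obtain ⟨a0⟩ : Nonempty A := Fintype.card_pos_iff.mp (by omega)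
  have hcard : ∀ a : A, Nat.card {b : B // E a b} = (univ.filter (fun b => E a b)).card := by
    intro a
    rw [Nat.card_eq_fintype_card, Fintype.card_subtype]
  have hδm : δ ≤ m := (hdeg a0).trans (by rw [hcard]; exact card_filter_le _ _)
  have hm1 : 1 ≤ m := hδ.trans hδm
  have hmpos : (0:ℝ) < m := by exact_mod_cast hm1
  have hδpos : (0:ℝ) < δ := by exact_mod_cast hδ
  have hx0 : 0 ≤ 1 - (δ:ℝ)/m := by
    have : (δ:ℝ)/m ≤ 1 := by
      rw [div_le_one hmpos]; exact_mod_cast hδm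
    linarith
  -- key averaging step
  have key : ∀ S : Finset A, S.Nonempty → ∃ b : B,
      (δ : ℝ) * S.card / m ≤ ((S.filter (fun a => E a b)).card : ℝ) := by
    intro S hS
    have hdc : ∑ b : B, ((S.filter (fun a => E a b)).card)
        = ∑ a ∈ S, (univ.filter (fun b => E a b)).card := by
      simp only [card_filter]
      exact Finset.sum_comm
    have hsum : (δ : ℝ) * S.card ≤ ∑ b : B, (((S.filter (fun a => E a b)).card : ℝ)) := by
      have h1 : δ * S.card ≤ ∑ b : B, ((S.filter (fun a => E a b)).card) := by
        rw [hdc]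
        calc δ * S.card = ∑ _a ∈ S, δ := by rw [Finset.sum_const, smul_eq_mul, mul_comm]
        _ ≤ ∑ a ∈ S, (univ.filter (fun b => E a b)).card :=
            Finset.sum_le_sum (fun a _ => by rw [← hcard]; exact hdeg a)
      exact_mod_cast h1
    have hBne : (univ : Finset B).Nonempty := univ_nonempty_iff.mpr
      (Fintype.card_pos_iff.mp (by omega))
    have hconst : ∑ _b : B, (δ:ℝ) * S.card / m = (δ:ℝ) * S.card := by
      rw [Finset.sum_const, card_univ, ← hm, nsmul_eq_mul]
      field_simp
    obtain ⟨b, _, hb⟩ := Finset.exists_le_of_sum_le hBne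
      (show ∑ _b : B, (δ : ℝ) * S.card / m
          ≤ ∑ b : B, (((S.filter (fun a => E a b)).card : ℝ)) by
        rw [hconst]; exact hsum)
    exact ⟨b, hb⟩
  -- greedy induction
  have ind : ∀ t : ℕ, ∃ B' : Finset B, B'.card ≤ t ∧
      (((univ.filter (fun a : A => ∀ b ∈ B', ¬ E a b)).card : ℝ)) ≤ n * (1 - (δ:ℝ)/m) ^ t := by
    intro t
    induction t with
    | zero =>
      refine ⟨∅, le_refl 0, ?_⟩
      simp only [pow_zero, mul_one]
      exact_mod_cast (card_filter_le _ _).trans_eq (card_univ)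
    | succ t ih =>
      obtain ⟨B', hc, hb⟩ := ih
      rcases (univ.filter (fun a : A => ∀ b ∈ B', ¬ E a b)).eq_empty_or_nonempty with hSe | hSne
      · refine ⟨B', hc.trans (Nat.le_succ t), ?_⟩
        rw [hSe]
        simp only [card_empty, Nat.cast_zero]
        positivity
      · obtain ⟨b, hbkey⟩ := key _ hSne
        refine ⟨insert b B', (card_insert_le _ _).trans (Nat.succ_le_succ hc), ?_⟩
        set S := univ.filter (fun a : A => ∀ b ∈ B', ¬ E a b) with hSdef
        have hset : univ.filter (fun a : A => ∀ b' ∈ insert b B', ¬ E a b')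
            = S.filter (fun a => ¬ E a b) := by
          ext a
          simp only [hSdef, mem_filter, mem_univ, true_and, Finset.forall_mem_insert]
          tauto
        rw [hset]
        have hsplit := Finset.card_filter_add_card_filter_not
          (s := S) (p := fun a => E a b)
        have hsplit' : ((S.filter (fun a => ¬ E a b)).card : ℝ)
            = S.card - (S.filter (fun a => E a b)).card := by
          have : (S.filter (fun a => E a b)).card + (S.filter (fun a => ¬ E a b)).card
              = S.card := hsplit
          have := congrArg (fun k : ℕ => (k : ℝ)) this
          push_cast at this
          linarith
        rw [hsplit']
        have h1 : (S.card:ℝ) - (S.filter (fun a => E a b)).card ≤ S.card * (1 - (δ:ℝ)/m) := by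
          have : (S.card : ℝ) * (1 - (δ:ℝ)/m) = S.card - (δ:ℝ) * S.card / m := by ring
          rw [this]
          linarith [hbkey]
        calc (S.card:ℝ) - (S.filter (fun a => E a b)).card
            ≤ S.card * (1 - (δ:ℝ)/m) := h1
          _ ≤ (n * (1 - (δ:ℝ)/m) ^ t) * (1 - (δ:ℝ)/m) :=
              mul_le_mul_of_nonneg_right hb hx0
          _ = n * (1 - (δ:ℝ)/m) ^ (t+1) := by ring
  -- conclusion
  set T := ⌈(m : ℝ) * Real.log n / δ⌉₊ with hT
  obtain ⟨B', hc, hb⟩ := ind T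
  have hlogn : 0 < Real.log n := Real.log_pos (by exact_mod_cast (by omega : 1 < n))
  have hT1 : 1 ≤ T := by
    rw [hT]
    exact Nat.one_le_iff_ne_zero.mpr (by
      rw [Ne, Nat.ceil_eq_zero, not_le]
      positivity)
  have hTx : Real.log n ≤ (T:ℝ) * ((δ:ℝ)/m) := by
    have h := Nat.le_ceil ((m:ℝ) * Real.log n / δ)
    rw [div_le_iff₀ hδpos] at h
    rw [mul_div_assoc', le_div_iff₀ hmpos]
    nlinarith [h]
  have hlt : (n:ℝ) * (1 - (δ:ℝ)/m) ^ T < 1 := by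
    have hxpos : 0 < (δ:ℝ)/m := by positivity
    have hstep : 1 - (δ:ℝ)/m < Real.exp (-((δ:ℝ)/m)) := by
      have := Real.add_one_lt_exp (show -((δ:ℝ)/m) ≠ 0 by
        intro h; rw [neg_eq_zero] at h; linarith)
      linarith
    have hpow : (1 - (δ:ℝ)/m) ^ T < (Real.exp (-((δ:ℝ)/m))) ^ T :=
      pow_lt_pow_left₀ hstep hx0 (by omega)
    have hexp : (Real.exp (-((δ:ℝ)/m))) ^ T = Real.exp (-((T:ℝ) * ((δ:ℝ)/m))) := by
      rw [← Real.exp_nat_mul]; ring_nf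
    have hnpos : (0:ℝ) < n := by exact_mod_cast (by omega : 0 < n)
    have hfin : (n:ℝ) * Real.exp (-((T:ℝ) * ((δ:ℝ)/m))) ≤ 1 := by
      have : Real.exp (-((T:ℝ) * ((δ:ℝ)/m))) ≤ Real.exp (-(Real.log n)) :=
        Real.exp_le_exp.mpr (by linarith)
      have h2 : Real.exp (-(Real.log n)) = 1 / n := by
        rw [Real.exp_neg, Real.exp_log hnpos, one_div]
      calc (n:ℝ) * Real.exp (-((T:ℝ) * ((δ:ℝ)/m))) ≤ n * Real.exp (-(Real.log n)) :=
            mul_le_mul_of_nonneg_left this (le_of_lt hnpos)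
        _ = 1 := by rw [h2]; field_simp
    calc (n:ℝ) * (1 - (δ:ℝ)/m) ^ T < n * (Real.exp (-((δ:ℝ)/m))) ^ T :=
          mul_lt_mul_of_pos_left hpow hnpos
      _ = n * Real.exp (-((T:ℝ) * ((δ:ℝ)/m))) := by rw [hexp]
      _ ≤ 1 := hfin
  refine ⟨B', hc, ?_⟩
  have hzero : (univ.filter (fun a : A => ∀ b ∈ B', ¬ E a b)).card = 0 := by
    have : ((univ.filter (fun a : A => ∀ b ∈ B', ¬ E a b)).card : ℝ) < 1 := hb.trans_lt hlt
    exact_mod_cast Nat.lt_one_iff.mp (by exact_mod_cast this)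
  rw [card_eq_zero] at hzero
  intro a
  by_contra hcon
  push_neg at hcon
  have : a ∈ univ.filter (fun a : A => ∀ b ∈ B', ¬ E a b) := by
    simp only [mem_filter, mem_univ, true_and]
    exact hcon
  rw [hzero] at this
  exact absurd this (notMem_empty a)
end

section
/- Let d ≥ 3 be an integer, set N = binom(d + 2, 2), let q be a prime power, and let P ∈ ℙ²(𝔽_q). Then the number of nonzero homogeneous polynomials F ∈ 𝔽_q[x,y,z] of degree d that vanish at P and are reducible in 𝔽_q[x,y,z] (i.e., F = GH with G, H nonconstant polynomials in 𝔽_q[x,y,z]) is at most d · q^{N−2}. -/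
open MvPolynomial

namespace StmtAux

set_option linter.unusedSectionVars false
variable {R : Type*} [CommRing R] [IsDomain R] {σ : Type*}

lemma exists_deg_eq {p : MvPolynomial σ R} (hp : p ≠ 0) :
    ∃ m ∈ p.support, m.degree = p.totalDegree := by
  obtain ⟨m, hm, he⟩ := Finset.exists_mem_eq_sup p.support
    (MvPolynomial.support_nonempty.mpr hp) (fun s => s.sum fun _ e => e)
  exact ⟨m, hm, by rw [MvPolynomial.totalDegree, he]; rfl⟩

lemma le_totalDegree' {p : MvPolynomial σ R} {m : σ →₀ ℕ} (hm : m ∈ p.support) :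
    m.degree ≤ p.totalDegree :=
  MvPolynomial.le_totalDegree hm

lemma topComp_ne_zero {p : MvPolynomial σ R} (hp : p ≠ 0) :
    homogeneousComponent p.totalDegree p ≠ 0 := by
  obtain ⟨m, hm, he⟩ := exists_deg_eq hp
  intro h
  have := coeff_homogeneousComponent (σ := σ) (R := R) p.totalDegree p m
  rw [h, if_pos he, coeff_zero] at this
  exact (MvPolynomial.mem_support_iff.mp hm) this.symm

lemma totalDegree_sub_topComp_lt {p : MvPolynomial σ R}
    (h : p - homogeneousComponent p.totalDegree p ≠ 0) :
    (p - homogeneousComponent p.totalDegree p).totalDegree < p.totalDegree := by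
  set r := p - homogeneousComponent p.totalDegree p with hr
  obtain ⟨m, hm, he⟩ := exists_deg_eq h
  have hc : coeff m r = coeff m p - (if m.degree = p.totalDegree then coeff m p else 0) := by
    rw [hr, coeff_sub, coeff_homogeneousComponent]
  have hne : coeff m r ≠ 0 := MvPolynomial.mem_support_iff.mp hm
  have hdm : m.degree ≠ p.totalDegree := by
    intro hdm
    rw [hdm] at hc
    simp at hc
    exact hne (by rw [hc])
  have hcp : coeff m r = coeff m p := by rw [hc, if_neg hdm, sub_zero]
  have hmp : m ∈ p.support := MvPolynomial.mem_support_iff.mpr (hcp ▸ hne)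
  have hle := le_totalDegree' hmp
  rw [← he]
  omega

end StmtAux

namespace StmtAux
open MvPolynomial
set_option linter.unusedSectionVars false

variable {R : Type*} [CommRing R] [IsDomain R] {σ : Type*}

lemma mul_eq_top_mul {p q : MvPolynomial σ R} {n : ℕ} (h : (p * q).IsHomogeneous n)
    (h0 : p * q ≠ 0) :
    p * q = homogeneousComponent p.totalDegree p * homogeneousComponent q.totalDegree q ∧
      p.totalDegree + q.totalDegree = n := by
  have hp : p ≠ 0 := left_ne_zero_of_mul h0
  have hq : q ≠ 0 := right_ne_zero_of_mul h0
  set P1 := homogeneousComponent p.totalDegree p with hP1def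
  set Q1 := homogeneousComponent q.totalDegree q with hQ1def
  have hP1 : P1 ≠ 0 := topComp_ne_zero hp
  have hQ1 : Q1 ≠ 0 := topComp_ne_zero hq
  have hP1h : P1.IsHomogeneous p.totalDegree := homogeneousComponent_isHomogeneous _ _
  have hQ1h : Q1.IsHomogeneous q.totalDegree := homogeneousComponent_isHomogeneous _ _
  set Δ := (p - P1) * q + P1 * (q - Q1) with hΔdef
  have key : p * q = P1 * Q1 + Δ := by rw [hΔdef]; ring
  have hΔ : Δ ≠ 0 → Δ.totalDegree < p.totalDegree + q.totalDegree := by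
    intro hΔne
    have b1 : (p - P1) * q = 0 ∨
        ((p - P1) * q).totalDegree < p.totalDegree + q.totalDegree := by
      by_cases h1 : p - P1 = 0
      · left; rw [h1, zero_mul]
      · right
        calc ((p - P1) * q).totalDegree ≤ (p - P1).totalDegree + q.totalDegree :=
              totalDegree_mul _ _
          _ < p.totalDegree + q.totalDegree :=
              Nat.add_lt_add_right (totalDegree_sub_topComp_lt h1) _
    have b2 : P1 * (q - Q1) = 0 ∨
        (P1 * (q - Q1)).totalDegree < p.totalDegree + q.totalDegree := by
      by_cases h2 : q - Q1 = 0
      · left; rw [h2, mul_zero]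
      · right
        calc (P1 * (q - Q1)).totalDegree ≤ P1.totalDegree + (q - Q1).totalDegree :=
              totalDegree_mul _ _
          _ < p.totalDegree + q.totalDegree :=
              Nat.add_lt_add_of_le_of_lt hP1h.totalDegree_le (totalDegree_sub_topComp_lt h2)
    rcases b1 with h1 | h1 <;> rcases b2 with h2 | h2
    · exact absurd (by rw [hΔdef, h1, h2, add_zero]) hΔne
    · calc Δ.totalDegree ≤ max ((p - P1) * q).totalDegree (P1 * (q - Q1)).totalDegree :=
          totalDegree_add _ _
        _ < _ := by rw [h1]; simpa using h2
    · calc Δ.totalDegree ≤ max ((p - P1) * q).totalDegree (P1 * (q - Q1)).totalDegree :=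
          totalDegree_add _ _
        _ < _ := by rw [h2]; simpa using h1
    · calc Δ.totalDegree ≤ max ((p - P1) * q).totalDegree (P1 * (q - Q1)).totalDegree :=
          totalDegree_add _ _
        _ < _ := max_lt h1 h2
  obtain ⟨m₀, hm₀⟩ := exists_coeff_ne_zero (mul_ne_zero hP1 hQ1)
  have hdeg₀ : m₀.degree = p.totalDegree + q.totalDegree := by
    by_contra hne
    exact hm₀ ((hP1h.mul hQ1h).coeff_eq_zero hne)
  have hcΔ : coeff m₀ Δ = 0 := by
    by_cases hz : Δ = 0
    · rw [hz, coeff_zero]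
    · refine coeff_eq_zero_of_totalDegree_lt ?_
      have : (∑ i ∈ m₀.support, m₀ i) = m₀.degree := rfl
      rw [this, hdeg₀]
      exact hΔ hz
  have hcpq : coeff m₀ (p * q) = coeff m₀ (P1 * Q1) := by
    rw [key, coeff_add, hcΔ, add_zero]
  have hm₀pq : coeff m₀ (p * q) ≠ 0 := by rw [hcpq]; exact hm₀
  have hn : n = p.totalDegree + q.totalDegree := by
    by_contra hne
    exact hm₀pq (h.coeff_eq_zero (by rw [hdeg₀]; exact fun hh => hne hh.symm))
  have hΔhom : (p * q - P1 * Q1).IsHomogeneous (p.totalDegree + q.totalDegree) :=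
    (hn ▸ h).sub (hP1h.mul hQ1h)
  have hsub : p * q - P1 * Q1 = Δ := by rw [key]; ring
  by_cases hz : p * q - P1 * Q1 = 0
  · exact ⟨sub_eq_zero.mp hz, hn.symm⟩
  · exfalso
    have h1 : (p * q - P1 * Q1).totalDegree = p.totalDegree + q.totalDegree :=
      hΔhom.totalDegree hz
    have h2 : Δ.totalDegree < p.totalDegree + q.totalDegree := hΔ (hsub ▸ hz)
    rw [hsub] at h1
    omega

end StmtAux

open MvPolynomial

namespace StmtAux2

abbrev Idx (k : ℕ) := Σ a : Fin (k + 1), Fin (k + 1 - (a : ℕ))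

lemma sum_T (n : ℕ) : 2 * ∑ a ∈ Finset.range n, (n - a) = n * (n + 1) := by
  induction n with
  | zero => simp
  | succ n ih =>
    have hstep : ∑ a ∈ Finset.range (n + 1), (n + 1 - a)
        = (∑ a ∈ Finset.range n, (n - a)) + (n + 1) := by
      rw [Finset.sum_range_succ]
      have : ∑ a ∈ Finset.range n, (n + 1 - a) = ∑ a ∈ Finset.range n, ((n - a) + 1) :=
        Finset.sum_congr rfl (fun a ha => by
          have := Finset.mem_range.mp ha; omega)
      rw [this, Finset.sum_add_distrib, Finset.sum_const, Finset.card_range]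
      simp; omega
    rw [hstep, Nat.mul_add, ih]; ring

lemma two_choose (k : ℕ) : 2 * (k + 2).choose 2 = (k + 1) * (k + 2) := by
  induction k with
  | zero => decide
  | succ k ih =>
    have : (k + 3).choose 2 = (k + 2).choose 1 + (k + 2).choose 2 := Nat.choose_succ_succ _ _
    rw [show k + 1 + 2 = k + 3 by ring, this, Nat.choose_one_right, Nat.mul_add, ih]
    ring

lemma card_Idx (k : ℕ) : Fintype.card (Idx k) = (k + 2).choose 2 := by
  have h1 : Fintype.card (Idx k) = ∑ a ∈ Finset.range (k + 1), (k + 1 - a) := by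
    rw [Fintype.card_sigma]
    rw [Fin.sum_univ_eq_sum_range (fun a => Fintype.card (Fin (k + 1 - a)))]
    simp
  have h2 := sum_T (k + 1)
  have h3 := two_choose k
  have : 2 * Fintype.card (Idx k) = 2 * (k + 2).choose 2 := by
    rw [h1, h2, h3]
  omega

/-- the monomial exponent vector `(a, b, c)`. -/
noncomputable def mk3 (a b c : ℕ) : Fin 3 →₀ ℕ := Finsupp.equivFunOnFinite.symm ![a, b, c]

@[simp] lemma mk3_apply_0 (a b c : ℕ) : mk3 a b c 0 = a := rfl
@[simp] lemma mk3_apply_1 (a b c : ℕ) : mk3 a b c 1 = b := rfl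
@[simp] lemma mk3_apply_2 (a b c : ℕ) : mk3 a b c 2 = c := rfl

lemma degree_fin3 (m : Fin 3 →₀ ℕ) : m.degree = m 0 + m 1 + m 2 := by
  rw [Finsupp.degree]
  show (∑ i ∈ m.support, m i) = _
  rw [Finset.sum_subset (Finset.subset_univ m.support)
    (fun i _ hi => Finsupp.notMem_support_iff.mp hi)]
  rw [Fin.sum_univ_three]

lemma mk3_eta (m : Fin 3 →₀ ℕ) : mk3 (m 0) (m 1) (m 2) = m := by
  ext i
  fin_cases i <;> simp

end StmtAux2

namespace StmtAux2
open MvPolynomial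

variable {F : Type} [Field F] [Fintype F]

lemma coeffFun_injective (k : ℕ) :
    Function.Injective (fun (G : {G : MvPolynomial (Fin 3) F // G.IsHomogeneous k})
      (x : Idx k) => coeff (mk3 (x.1 : ℕ) (x.2 : ℕ) (k - (x.1 : ℕ) - (x.2 : ℕ))) G.1) := by
  rintro ⟨G₁, h₁⟩ ⟨G₂, h₂⟩ h
  ext1
  ext m
  by_cases hm : m.degree = k
  · have hd := degree_fin3 m
    have ha : (m 0 : ℕ) < k + 1 := by omega
    have hb : (m 1 : ℕ) < k + 1 - m 0 := by omega
    have hm2 : k - m 0 - m 1 = m 2 := by omega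
    have hmk : mk3 (m 0) (m 1) (k - m 0 - m 1) = m := by rw [hm2]; exact mk3_eta m
    have h' := congrFun h (⟨⟨m 0, ha⟩, ⟨m 1, hb⟩⟩ : Idx k)
    simpa [hmk] using h'
  · rw [h₁.coeff_eq_zero hm, h₂.coeff_eq_zero hm]

instance homogFinite (k : ℕ) : Finite {G : MvPolynomial (Fin 3) F // G.IsHomogeneous k} :=
  Finite.of_injective _ (coeffFun_injective k)

lemma card_homog_le (k : ℕ) :
    Nat.card {G : MvPolynomial (Fin 3) F // G.IsHomogeneous k}
      ≤ Fintype.card F ^ ((k + 2).choose 2) := by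
  calc Nat.card {G : MvPolynomial (Fin 3) F // G.IsHomogeneous k}
      ≤ Nat.card (Idx k → F) := Nat.card_le_card_of_injective _ (coeffFun_injective k)
    _ = Fintype.card F ^ ((k + 2).choose 2) := by
        rw [Nat.card_fun, Nat.card_eq_fintype_card, Nat.card_eq_fintype_card, card_Idx]

end StmtAux2

namespace StmtAux2
open MvPolynomial
set_option linter.unusedSectionVars false

variable {F : Type} [Field F] [Fintype F]

lemma vanish_finite (v : Fin 3 → F) (k : ℕ) :
    Finite {G : MvPolynomial (Fin 3) F // G.IsHomogeneous k ∧ eval v G = 0} := by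
  refine Finite.of_injective
    (fun G => (⟨G.1, G.2.1⟩ : {G : MvPolynomial (Fin 3) F // G.IsHomogeneous k})) ?_
  rintro ⟨G₁, h₁⟩ ⟨G₂, h₂⟩ h
  simpa using congrArg Subtype.val h

lemma card_vanish_le (v : Fin 3 → F) (hv : v ≠ 0) (k : ℕ) :
    Nat.card {G : MvPolynomial (Fin 3) F // G.IsHomogeneous k ∧ eval v G = 0}
      ≤ Fintype.card F ^ ((k + 2).choose 2 - 1) := by
  obtain ⟨i, hi⟩ : ∃ i, v i ≠ 0 := by
    by_contra h
    push_neg at h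
    exact hv (funext h)
  have hvk : (v i) ^ k ≠ 0 := pow_ne_zero _ hi
  set G₁ : MvPolynomial (Fin 3) F := C ((v i ^ k)⁻¹) * X i ^ k with hG₁def
  have hG₁hom : G₁.IsHomogeneous k := isHomogeneous_C_mul_X_pow _ i k
  have hevalG₁ : eval v G₁ = 1 := by
    rw [hG₁def]
    simp [inv_mul_cancel₀ hvk]
  have := vanish_finite v k
  have hinj : Function.Injective
      (fun (x : {G : MvPolynomial (Fin 3) F // G.IsHomogeneous k ∧ eval v G = 0} × F) =>
        (⟨x.1.1 + C x.2 * G₁, x.1.2.1.add (hG₁hom.C_mul _)⟩ :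
          {G : MvPolynomial (Fin 3) F // G.IsHomogeneous k})) := by
    rintro ⟨⟨G, hG, hGv⟩, c⟩ ⟨⟨G', hG', hGv'⟩, c'⟩ h
    have h1 : G + C c * G₁ = G' + C c' * G₁ := congrArg Subtype.val h
    have h2 : c = c' := by
      have := congrArg (eval v) h1
      simpa [hGv, hGv', hevalG₁] using this
    subst h2
    have h3 : G = G' := by
      have := add_right_cancel h1
      exact this
    simp [h3]
  have hcard := Nat.card_le_card_of_injective _ hinj
  rw [Nat.card_prod, Nat.card_eq_fintype_card (α := F)] at hcard
  have hch := card_homog_le (F := F) k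
  have hpos : 0 < Fintype.card F := Fintype.card_pos
  have hc1 : 1 ≤ (k + 2).choose 2 := Nat.choose_pos (by omega)
  have hsplit : Fintype.card F ^ ((k + 2).choose 2)
      = Fintype.card F ^ ((k + 2).choose 2 - 1) * Fintype.card F := by
    rw [← pow_succ]
    congr 1
    omega
  have : Nat.card {G : MvPolynomial (Fin 3) F // G.IsHomogeneous k ∧ eval v G = 0}
      * Fintype.card F ≤ Fintype.card F ^ ((k + 2).choose 2 - 1) * Fintype.card F := by
    calc _ ≤ Nat.card {G : MvPolynomial (Fin 3) F // G.IsHomogeneous k} := hcard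
      _ ≤ _ := by rw [← hsplit]; exact hch
  exact Nat.le_of_mul_le_mul_right this hpos

end StmtAux2

namespace StmtAux2
open MvPolynomial
set_option linter.unusedSectionVars false

variable {F : Type} [Field F] [Fintype F]

lemma card_pairs_le (v : Fin 3 → F) (hv : v ≠ 0) (e m : ℕ) :
    Nat.card {p : MvPolynomial (Fin 3) F × MvPolynomial (Fin 3) F //
        p.1.IsHomogeneous e ∧ p.2.IsHomogeneous m ∧ (eval v p.1 = 0 ∨ eval v p.2 = 0)}
      ≤ 2 * Fintype.card F ^ ((e + 2).choose 2 + (m + 2).choose 2 - 1) := by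
  classical
  have h1 := vanish_finite v e
  have h2 := vanish_finite v m
  have hΦinj : Function.Injective
      (fun (p : {p : MvPolynomial (Fin 3) F × MvPolynomial (Fin 3) F //
          p.1.IsHomogeneous e ∧ p.2.IsHomogeneous m ∧ (eval v p.1 = 0 ∨ eval v p.2 = 0)}) =>
        if h : eval v p.1.1 = 0 then
          (Sum.inl (⟨p.1.1, p.2.1, h⟩, ⟨p.1.2, p.2.2.1⟩) :
            ({G : MvPolynomial (Fin 3) F // G.IsHomogeneous e ∧ eval v G = 0} ×
              {H : MvPolynomial (Fin 3) F // H.IsHomogeneous m}) ⊕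
            ({G : MvPolynomial (Fin 3) F // G.IsHomogeneous e} ×
              {H : MvPolynomial (Fin 3) F // H.IsHomogeneous m ∧ eval v H = 0}))
        else
          Sum.inr (⟨p.1.1, p.2.1⟩, ⟨p.1.2, p.2.2.1, p.2.2.2.resolve_left h⟩)) := by
    rintro ⟨⟨G, H⟩, hp⟩ ⟨⟨G', H'⟩, hp'⟩ hEq
    dsimp only at hEq
    split_ifs at hEq with ha hb hb <;>
    first
      | (exact Subtype.ext (Prod.ext_iff.mpr
          ⟨congrArg (fun x => x.1.1) (Sum.inl.inj hEq),
           congrArg (fun x => x.2.1) (Sum.inl.inj hEq)⟩))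
      | (exact Subtype.ext (Prod.ext_iff.mpr
          ⟨congrArg (fun x => x.1.1) (Sum.inr.inj hEq),
           congrArg (fun x => x.2.1) (Sum.inr.inj hEq)⟩))
      | (exact absurd hEq (fun hc => Sum.noConfusion hc))
  have hle1 : Nat.card ({G : MvPolynomial (Fin 3) F // G.IsHomogeneous e ∧ eval v G = 0} ×
        {H : MvPolynomial (Fin 3) F // H.IsHomogeneous m})
      ≤ Fintype.card F ^ ((e + 2).choose 2 - 1 + (m + 2).choose 2) := by
    rw [Nat.card_prod, pow_add]
    exact Nat.mul_le_mul (card_vanish_le v hv e) (card_homog_le m)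
  have hle2 : Nat.card ({G : MvPolynomial (Fin 3) F // G.IsHomogeneous e} ×
        {H : MvPolynomial (Fin 3) F // H.IsHomogeneous m ∧ eval v H = 0})
      ≤ Fintype.card F ^ ((e + 2).choose 2 + ((m + 2).choose 2 - 1)) := by
    rw [Nat.card_prod, pow_add]
    exact Nat.mul_le_mul (card_homog_le e) (card_vanish_le v hv m)
  have hce : 1 ≤ (e + 2).choose 2 := Nat.choose_pos (by omega)
  have hcm : 1 ≤ (m + 2).choose 2 := Nat.choose_pos (by omega)
  have he1 : (e + 2).choose 2 - 1 + (m + 2).choose 2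
      = (e + 2).choose 2 + (m + 2).choose 2 - 1 := by omega
  have he2 : (e + 2).choose 2 + ((m + 2).choose 2 - 1)
      = (e + 2).choose 2 + (m + 2).choose 2 - 1 := by omega
  calc Nat.card _ ≤ Nat.card
        (({G : MvPolynomial (Fin 3) F // G.IsHomogeneous e ∧ eval v G = 0} ×
          {H : MvPolynomial (Fin 3) F // H.IsHomogeneous m}) ⊕
         ({G : MvPolynomial (Fin 3) F // G.IsHomogeneous e} ×
          {H : MvPolynomial (Fin 3) F // H.IsHomogeneous m ∧ eval v H = 0})) :=
      Nat.card_le_card_of_injective _ hΦinj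
    _ = _ + _ := Nat.card_sum
    _ ≤ 2 * Fintype.card F ^ ((e + 2).choose 2 + (m + 2).choose 2 - 1) := by
        rw [he1] at hle1
        rw [he2] at hle2
        omega

end StmtAux2


namespace StmtAux2

lemma exp_le {d e : ℕ} (hd : 3 ≤ d) (he : 1 ≤ e) (he2 : e * 2 ≤ d) :
    (e + 2).choose 2 + (d - e + 2).choose 2 - 1 ≤ (d + 2).choose 2 - 2 := by
  set m := d - e with hm
  have hm2 : 2 ≤ m := by omega
  have hem : e + m = d := by omega
  have h2A := two_choose e
  have h2B := two_choose m
  have h2C := two_choose d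
  have key : (e + 1) * (e + 2) + (m + 1) * (m + 2) + 2 ≤ (d + 1) * (d + 2) := by
    have h12 : 1 * 2 ≤ e * m := Nat.mul_le_mul he hm2
    nlinarith [h12, hem]
  have hABC : (e + 2).choose 2 + (m + 2).choose 2 + 1 ≤ (d + 2).choose 2 := by
    linarith [key, h2A, h2B, h2C]
  have hA1 : 1 ≤ (e + 2).choose 2 := Nat.choose_pos (by omega)
  have hB1 : 1 ≤ (m + 2).choose 2 := Nat.choose_pos (by omega)
  omega

/-- pairs of homogeneous polynomials with one factor vanishing at `v`. -/
def WSet (F : Type) [Field F] (v : Fin 3 → F) (a b : ℕ) : Type :=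
  {p : MvPolynomial (Fin 3) F × MvPolynomial (Fin 3) F //
    p.1.IsHomogeneous a ∧ p.2.IsHomogeneous b ∧
      (MvPolynomial.eval v p.1 = 0 ∨ MvPolynomial.eval v p.2 = 0)}

instance wsetFinite (F : Type) [Field F] [Fintype F] (v : Fin 3 → F) (a b : ℕ) :
    Finite (WSet F v a b) := by
  refine Finite.of_injective (fun p =>
    ((⟨p.1.1, p.2.1⟩ : {G : MvPolynomial (Fin 3) F // G.IsHomogeneous a}),
     (⟨p.1.2, p.2.2.1⟩ : {H : MvPolynomial (Fin 3) F // H.IsHomogeneous b}))) ?_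
  rintro ⟨⟨G, H⟩, hp⟩ ⟨⟨G', H'⟩, hp'⟩ h
  simp only [Prod.mk.injEq, Subtype.mk.injEq] at h
  exact Subtype.ext (Prod.ext_iff.mpr h)

lemma card_wset_le (F : Type) [Field F] [Fintype F] (v : Fin 3 → F) (hv : v ≠ 0) (a b : ℕ) :
    Nat.card (WSet F v a b)
      ≤ 2 * Fintype.card F ^ ((a + 2).choose 2 + (b + 2).choose 2 - 1) :=
  card_pairs_le v hv a b

end StmtAux2





open MvPolynomial

/-- The number of nonzero homogeneous degree-`d` polynomials over `𝔽_q` vanishing at a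
given point `P ∈ ℙ²(𝔽_q)` and reducible over `𝔽_q` is at most `d · q^{N−2}`,
where `N = binom(d+2, 2)`. -/
theorem stmt10 (d : ℕ) (hd : 3 ≤ d) (F : Type) [Field F] [Fintype F]
    (P : Projectivization F (Fin 3 → F)) :
    Nat.card {f : MvPolynomial (Fin 3) F //
        f ≠ 0 ∧ f.IsHomogeneous d ∧ P ∈ projZeroSet f ∧
        ∃ G H : MvPolynomial (Fin 3) F,
          f = G * H ∧ G.totalDegree ≠ 0 ∧ H.totalDegree ≠ 0}
      ≤ d * Fintype.card F ^ (Nat.choose (d + 2) 2 - 2) := by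
  classical
  set v : Fin 3 → F := P.rep with hvdef
  have hv : v ≠ 0 := P.rep_nonzero
  set q := Fintype.card F with hq
  set N := (d + 2).choose 2 with hN
  -- the target sigma type
  set T := (i : Fin (d / 2)) × StmtAux2.WSet F v ((i : ℕ) + 1) (d - ((i : ℕ) + 1)) with hT
  have hq1 : 1 ≤ q := Fintype.card_pos
  -- every reducible f gives an element of T whose product is f
  have hstep : ∀ f : {f : MvPolynomial (Fin 3) F //
        f ≠ 0 ∧ f.IsHomogeneous d ∧ P ∈ projZeroSet f ∧
        ∃ G H : MvPolynomial (Fin 3) F,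
          f = G * H ∧ G.totalDegree ≠ 0 ∧ H.totalDegree ≠ 0},
      ∃ x : T, x.2.1.1 * x.2.1.2 = f.1 := by
    rintro ⟨f, hne, hhom, hvan, G, H, hfGH, hG, hH⟩
    have h0 : G * H ≠ 0 := by rw [← hfGH]; exact hne
    have hhom' : (G * H).IsHomogeneous d := by rw [← hfGH]; exact hhom
    obtain ⟨heq, hsum⟩ := StmtAux.mul_eq_top_mul hhom' h0
    set G1 := homogeneousComponent G.totalDegree G with hG1def
    set H1 := homogeneousComponent H.totalDegree H with hH1def
    have hG1 : G1.IsHomogeneous G.totalDegree := homogeneousComponent_isHomogeneous _ _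
    have hH1 : H1.IsHomogeneous H.totalDegree := homogeneousComponent_isHomogeneous _ _
    have hmk : Projectivization.mk F v hv = P := P.mk_rep
    have heval : MvPolynomial.eval v f = 0 := hvan v hv hmk
    have hevalGH : MvPolynomial.eval v G1 * MvPolynomial.eval v H1 = 0 := by
      rw [← map_mul, ← heq, ← hfGH]
      exact heval
    have hor := mul_eq_zero.mp hevalGH
    rcases le_total G.totalDegree H.totalDegree with hab | hab
    · -- use (G1, H1), e = G.totalDegree
      have he1 : 1 ≤ G.totalDegree := Nat.one_le_iff_ne_zero.mpr hG
      have he2 : G.totalDegree * 2 ≤ d := by omega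
      have hlt : G.totalDegree - 1 < d / 2 := by omega
      have hplus : (((⟨G.totalDegree - 1, hlt⟩ : Fin (d / 2)) : ℕ)) + 1 = G.totalDegree := by
        simp; omega
      refine ⟨⟨⟨G.totalDegree - 1, hlt⟩, ⟨(G1, H1), ?_, ?_, ?_⟩⟩, ?_⟩
      · rw [hplus]; exact hG1
      · rw [hplus]
        have : d - G.totalDegree = H.totalDegree := by omega
        rw [this]; exact hH1
      · exact hor
      · exact (hfGH.trans heq).symm
    · -- use (H1, G1), e = H.totalDegree
      have he1 : 1 ≤ H.totalDegree := Nat.one_le_iff_ne_zero.mpr hH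
      have he2 : H.totalDegree * 2 ≤ d := by omega
      have hlt : H.totalDegree - 1 < d / 2 := by omega
      have hplus : (((⟨H.totalDegree - 1, hlt⟩ : Fin (d / 2)) : ℕ)) + 1 = H.totalDegree := by
        simp; omega
      refine ⟨⟨⟨H.totalDegree - 1, hlt⟩, ⟨(H1, G1), ?_, ?_, ?_⟩⟩, ?_⟩
      · rw [hplus]; exact hH1
      · rw [hplus]
        have : d - H.totalDegree = G.totalDegree := by omega
        rw [this]; exact hG1
      · exact hor.symm
      · rw [mul_comm]
        exact (hfGH.trans heq).symm
  -- the injection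
  have hinj : Function.Injective (fun f : {f : MvPolynomial (Fin 3) F //
        f ≠ 0 ∧ f.IsHomogeneous d ∧ P ∈ projZeroSet f ∧
        ∃ G H : MvPolynomial (Fin 3) F,
          f = G * H ∧ G.totalDegree ≠ 0 ∧ H.totalDegree ≠ 0} => (hstep f).choose) := by
    intro f₁ f₂ h
    have h1 := (hstep f₁).choose_spec
    have h2 := (hstep f₂).choose_spec
    refine Subtype.ext ?_
    rw [← h1, ← h2]
    exact congrArg (fun x : T => x.2.1.1 * x.2.1.2) h
  have hcard1 := Nat.card_le_card_of_injective _ hinj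
  refine le_trans hcard1 ?_
  -- compute the card of T
  letI : ∀ i : Fin (d / 2), Fintype (StmtAux2.WSet F v ((i : ℕ) + 1) (d - ((i : ℕ) + 1))) :=
    fun i => Fintype.ofFinite _
  have hcardT : Nat.card T
      = ∑ i : Fin (d / 2), Nat.card (StmtAux2.WSet F v ((i : ℕ) + 1) (d - ((i : ℕ) + 1))) := by
    rw [hT, Nat.card_eq_fintype_card, Fintype.card_sigma]
    exact Finset.sum_congr rfl fun i _ => (Nat.card_eq_fintype_card).symm
  rw [hcardT]
  have hbound : ∀ i : Fin (d / 2),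
      Nat.card (StmtAux2.WSet F v ((i : ℕ) + 1) (d - ((i : ℕ) + 1))) ≤ 2 * q ^ (N - 2) := by
    intro i
    have hi := i.2
    have he1 : 1 ≤ (i : ℕ) + 1 := by omega
    have he2 : ((i : ℕ) + 1) * 2 ≤ d := by omega
    have hexp := StmtAux2.exp_le hd he1 he2
    calc Nat.card (StmtAux2.WSet F v ((i : ℕ) + 1) (d - ((i : ℕ) + 1)))
        ≤ 2 * q ^ (((i : ℕ) + 1 + 2).choose 2 + (d - ((i : ℕ) + 1) + 2).choose 2 - 1) :=
          StmtAux2.card_wset_le F v hv _ _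
      _ ≤ 2 * q ^ (N - 2) :=
          Nat.mul_le_mul_left 2 (Nat.pow_le_pow_right hq1 hexp)
  calc ∑ i : Fin (d / 2), Nat.card (StmtAux2.WSet F v ((i : ℕ) + 1) (d - ((i : ℕ) + 1)))
      ≤ ∑ _i : Fin (d / 2), 2 * q ^ (N - 2) :=
        Finset.sum_le_sum fun i _ => hbound i
    _ = (d / 2) * (2 * q ^ (N - 2)) := by
        rw [Finset.sum_const, Finset.card_univ, Fintype.card_fin, smul_eq_mul]
    _ ≤ d * q ^ (N - 2) := by
        rw [← Nat.mul_assoc]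
        exact Nat.mul_le_mul_right _ (by omega)
end

section
/- Let d ≥ 3 be an integer and q a prime power. For α ∈ 𝔽_q let C_α ⊂ ℙ² be the plane curve over 𝔽_q defined by y·z^{d−1} = x^d − α·z^d. Then there exists a subset S ⊆ 𝔽_q of size at most 1 + ⌊2·log q / log(d/(d−1))⌋ such that ∪_{α∈S} C_α(𝔽_q) is a blocking set in ℙ²(𝔽_q). -/
open MvPolynomial

open scoped Classical

/-- Fiber bound: the image of `t ↦ t^d + a t + c` has size at least `q/d`. -/
lemma aux_fiber_card (d : ℕ) (hd : 3 ≤ d) {F : Type} [Field F] [Fintype F] (a c : F) :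
    Fintype.card F ≤ d * ((Finset.univ : Finset F).image (fun t : F => t ^ d + a * t + c)).card := by
  classical
  have := Finset.card_le_mul_card_image (s := (Finset.univ : Finset F))
    (f := fun t : F => t ^ d + a * t + c) d ?_
  · simpa using this
  · intro y _
    set p : Polynomial F := Polynomial.X ^ d + Polynomial.C a * Polynomial.X + Polynomial.C (c - y)
      with hp
    have hdeg : p.natDegree ≤ d := by
      apply le_trans (Polynomial.natDegree_add_le _ _)
      simp only [max_le_iff]
      constructor
      · apply le_trans (Polynomial.natDegree_add_le _ _)
        simp only [Polynomial.natDegree_X_pow, max_le_iff, le_refl, true_and]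
        refine le_trans (Polynomial.natDegree_C_mul_le _ _) ?_
        rw [Polynomial.natDegree_X]
        omega
      · calc (Polynomial.C (c - y)).natDegree = 0 := Polynomial.natDegree_C _
          _ ≤ d := Nat.zero_le d
    have hpne : p ≠ 0 := by
      have hcoeff : p.coeff d = 1 := by
        simp only [hp, Polynomial.coeff_add, Polynomial.coeff_X_pow, Polynomial.coeff_C_mul,
          Polynomial.coeff_X, Polynomial.coeff_C]
        split_ifs <;> first | ring1 | (exfalso; omega)
      intro h
      rw [h] at hcoeff
      simp at hcoeff
    have hsub : {t ∈ (Finset.univ : Finset F) | t ^ d + a * t + c = y} ⊆ p.roots.toFinset := by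
      intro t ht
      simp only [Finset.mem_filter, Finset.mem_univ, true_and] at ht
      rw [Multiset.mem_toFinset, Polynomial.mem_roots hpne]
      simp [p, Polynomial.IsRoot, Polynomial.eval_add, Polynomial.eval_pow]
      linear_combination ht
    calc {t ∈ (Finset.univ : Finset F) | t ^ d + a * t + c = y}.card
        ≤ p.roots.toFinset.card := Finset.card_le_card hsub
      _ ≤ Multiset.card p.roots := Multiset.toFinset_card_le _
      _ ≤ p.natDegree := Polynomial.card_roots' p
      _ ≤ d := hdeg

/-- Greedy step: some `α` blocks at least a `1/d` fraction of the lines in `U`. -/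
lemma aux_greedy (d : ℕ) (hd : 3 ≤ d) {F : Type} [Field F] [Fintype F] (U : Finset (F × F)) :
    ∃ α : F, U.card ≤ d * (U.filter (fun p => ∃ t : F, t ^ d + p.1 * t + p.2 = α)).card := by
  classical
  set B : F → ℕ := fun α => (U.filter (fun p => ∃ t : F, t ^ d + p.1 * t + p.2 = α)).card with hB
  have hswap : ∑ α : F, B α = ∑ p ∈ U,
      ((Finset.univ : Finset F).filter (fun α => ∃ t : F, t ^ d + p.1 * t + p.2 = α)).card := by
    simp only [hB, Finset.card_filter]
    rw [Finset.sum_comm]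
  have himg : ∀ p : F × F,
      ((Finset.univ : Finset F).filter (fun α => ∃ t : F, t ^ d + p.1 * t + p.2 = α))
        = (Finset.univ : Finset F).image (fun t : F => t ^ d + p.1 * t + p.2) := by
    intro p
    ext α
    simp [eq_comm]
  have hlow : Fintype.card F * U.card ≤ d * ∑ α : F, B α := by
    rw [hswap, Finset.mul_sum]
    calc Fintype.card F * U.card = ∑ _p ∈ U, Fintype.card F := by rw [Finset.sum_const]; ring
      _ ≤ _ := by
          apply Finset.sum_le_sum
          intro p _
          rw [himg p]
          exact aux_fiber_card d hd p.1 p.2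
  obtain ⟨α, -, hmax⟩ := Finset.exists_max_image (Finset.univ : Finset F) B
    Finset.univ_nonempty
  refine ⟨α, ?_⟩
  have hsum : ∑ β : F, B β ≤ Fintype.card F * B α := by
    calc ∑ β : F, B β ≤ ∑ _β : F, B α := Finset.sum_le_sum (fun β _ => hmax β (Finset.mem_univ β))
      _ = Fintype.card F * B α := by rw [Finset.sum_const]; simp [mul_comm]
  have hq : 0 < Fintype.card F := Fintype.card_pos
  have : Fintype.card F * U.card ≤ Fintype.card F * (d * B α) := by
    calc Fintype.card F * U.card ≤ d * ∑ β : F, B β := hlow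
      _ ≤ d * (Fintype.card F * B α) := Nat.mul_le_mul_left d hsum
      _ = Fintype.card F * (d * B α) := by ring
  exact Nat.le_of_mul_le_mul_left this hq

/-- Iterated greedy: after `n` steps the unblocked lines shrink by `((d-1)/d)^n`. -/
lemma aux_iterate (d : ℕ) (hd : 3 ≤ d) {F : Type} [Field F] [Fintype F] (n : ℕ) :
    ∃ S : Finset F, S.card ≤ n ∧
      d ^ n * ((Finset.univ : Finset (F × F)).filter
        (fun p => ∀ α ∈ S, ¬ ∃ t : F, t ^ d + p.1 * t + p.2 = α)).card
      ≤ (d - 1) ^ n * Fintype.card F ^ 2 := by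
  classical
  induction n with
  | zero =>
      refine ⟨∅, le_refl 0, ?_⟩
      simp [Fintype.card_prod, sq]
  | succ n ih =>
      obtain ⟨S, hScard, hbound⟩ := ih
      set U := (Finset.univ : Finset (F × F)).filter
        (fun p => ∀ α ∈ S, ¬ ∃ t : F, t ^ d + p.1 * t + p.2 = α) with hUdef
      obtain ⟨α, hα⟩ := aux_greedy d hd U
      refine ⟨insert α S, le_trans (Finset.card_insert_le _ _) (by omega), ?_⟩
      have hU' : (Finset.univ : Finset (F × F)).filter
          (fun p => ∀ β ∈ insert α S, ¬ ∃ t : F, t ^ d + p.1 * t + p.2 = β)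
          = U.filter (fun p => ¬ ∃ t : F, t ^ d + p.1 * t + p.2 = α) := by
        rw [hUdef, Finset.filter_filter]
        apply Finset.filter_congr
        intro p _
        simp only [Finset.mem_insert]
        constructor
        · intro h
          exact ⟨fun β hβ => h β (Or.inr hβ), h α (Or.inl rfl)⟩
        · rintro ⟨h1, h2⟩ β hβ
          rcases hβ with rfl | hβ
          · exact h2
          · exact h1 β hβ
      rw [hU']
      have hsplit : (U.filter (fun p => ∃ t : F, t ^ d + p.1 * t + p.2 = α)).card
          + (U.filter (fun p => ¬ ∃ t : F, t ^ d + p.1 * t + p.2 = α)).card = U.card :=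
        Finset.card_filter_add_card_filter_not _
      set m := (U.filter (fun p => ¬ ∃ t : F, t ^ d + p.1 * t + p.2 = α)).card
      have hstep : d * m ≤ (d - 1) * U.card := by
        have h1 : (d - 1) * U.card + U.card = d * U.card := by
          have : d - 1 + 1 = d := by omega
          calc (d - 1) * U.card + U.card = (d - 1 + 1) * U.card := by ring
            _ = d * U.card := by rw [this]
        have h2 : d * m + d * (U.filter (fun p => ∃ t : F, t ^ d + p.1 * t + p.2 = α)).card
            = d * U.card := by rw [← Nat.mul_add, Nat.add_comm m, hsplit]
        omega
      calc d ^ (n + 1) * m = d ^ n * (d * m) := by ring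
        _ ≤ d ^ n * ((d - 1) * U.card) := Nat.mul_le_mul_left _ hstep
        _ = (d - 1) * (d ^ n * U.card) := by ring
        _ ≤ (d - 1) * ((d - 1) ^ n * Fintype.card F ^ 2) := Nat.mul_le_mul_left _ hbound
        _ = (d - 1) ^ (n + 1) * Fintype.card F ^ 2 := by ring

/-- Numeric bound: with `n = 1 + ⌊2 log q / log (d/(d-1))⌋`, `(d-1)^n q² < d^n`. -/
lemma aux_numeric (d : ℕ) (hd : 3 ≤ d) (q : ℕ) (hq : 2 ≤ q) :
    (d - 1) ^ (1 + ⌊2 * Real.log q / Real.log ((d : ℝ) / ((d : ℝ) - 1))⌋₊) * q ^ 2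
      < d ^ (1 + ⌊2 * Real.log q / Real.log ((d : ℝ) / ((d : ℝ) - 1))⌋₊) := by
  set x : ℝ := 2 * Real.log q / Real.log ((d : ℝ) / ((d : ℝ) - 1)) with hx
  set n : ℕ := 1 + ⌊x⌋₊ with hn
  have hD1 : (1 : ℝ) < (d : ℝ) - 1 := by
    have : (3 : ℝ) ≤ (d : ℝ) := by exact_mod_cast hd
    linarith
  have hDpos : (0 : ℝ) < (d : ℝ) - 1 := by linarith
  have hr : (1 : ℝ) < (d : ℝ) / ((d : ℝ) - 1) := by
    rw [lt_div_iff₀ hDpos]; linarith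
  have hlogr : 0 < Real.log ((d : ℝ) / ((d : ℝ) - 1)) := Real.log_pos hr
  have hxlt : x < n := by
    rw [hn]
    push_cast
    have := Nat.lt_floor_add_one x
    linarith
  have hkey : 2 * Real.log q < n * Real.log ((d : ℝ) / ((d : ℝ) - 1)) := by
    have := (div_lt_iff₀ hlogr).mp (hxlt)
    linarith [this]
  -- exponentiate
  have hqpos : (0 : ℝ) < (q : ℝ) := by positivity
  have h1 : (q : ℝ) ^ 2 < ((d : ℝ) / ((d : ℝ) - 1)) ^ n := by
    have hl : Real.log ((q : ℝ) ^ 2) < Real.log (((d : ℝ) / ((d : ℝ) - 1)) ^ n) := by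
      rw [Real.log_pow, Real.log_pow]
      push_cast
      linarith [hkey]
    have h2pos : (0 : ℝ) < (q : ℝ) ^ 2 := by positivity
    exact (Real.log_lt_log_iff h2pos (by positivity)).mp hl
  have h2 : ((d : ℝ) - 1) ^ n * (q : ℝ) ^ 2 < (d : ℝ) ^ n := by
    have := mul_lt_mul_of_pos_left h1 (show (0:ℝ) < ((d:ℝ)-1)^n by positivity)
    calc ((d : ℝ) - 1) ^ n * (q : ℝ) ^ 2 < ((d : ℝ) - 1) ^ n * ((d : ℝ) / ((d : ℝ) - 1)) ^ n :=
          this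
      _ = (d : ℝ) ^ n := by
          rw [← mul_pow]
          congr 1
          field_simp
  have hcast : ((d - 1 : ℕ) : ℝ) = (d : ℝ) - 1 := by
    have : (1 : ℕ) ≤ d := by omega
    push_cast [this]
    ring
  have : (((d - 1) ^ n * q ^ 2 : ℕ) : ℝ) < ((d ^ n : ℕ) : ℝ) := by
    push_cast [hcast]
    exact h2
  exact_mod_cast this

/-- For `d ≥ 3` and the pencil of curves `C_α : y z^{d−1} = x^d − α z^d` over `𝔽_q`, there
is a set `S ⊆ 𝔽_q` of size at most `1 + ⌊2 log q / log(d/(d−1))⌋` such that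
`⋃_{α ∈ S} C_α(𝔽_q)` is a blocking set in `ℙ²(𝔽_q)`. -/
theorem stmt13 (d : ℕ) (hd : 3 ≤ d) (F : Type) [Field F] [Fintype F] :
    ∃ S : Finset F,
      S.card ≤ 1 + ⌊2 * Real.log (Fintype.card F) /
          Real.log ((d : ℝ) / ((d : ℝ) - 1))⌋₊ ∧
      IsBlockingSet (⋃ α ∈ S,
        projZeroSet (X 1 * X 2 ^ (d - 1) - X 0 ^ d + C α * X 2 ^ d)) := by
  classical
  set q := Fintype.card F with hq
  set n : ℕ := 1 + ⌊2 * Real.log q / Real.log ((d : ℝ) / ((d : ℝ) - 1))⌋₊ with hn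
  obtain ⟨S, hScard, hbound⟩ := aux_iterate d hd (F := F) n
  have hq2 : 2 ≤ q := Fintype.one_lt_card
  have hnum := aux_numeric d hd q hq2
  rw [← hn] at hnum
  -- the set of unblocked lines is empty
  have hempty : ((Finset.univ : Finset (F × F)).filter
      (fun p => ∀ α ∈ S, ¬ ∃ t : F, t ^ d + p.1 * t + p.2 = α)).card = 0 := by
    by_contra h
    have h1 : 1 ≤ ((Finset.univ : Finset (F × F)).filter
        (fun p => ∀ α ∈ S, ¬ ∃ t : F, t ^ d + p.1 * t + p.2 = α)).card := by omega
    have : d ^ n ≤ (d - 1) ^ n * q ^ 2 := by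
      calc d ^ n = d ^ n * 1 := by ring
        _ ≤ d ^ n * _ := Nat.mul_le_mul_left _ h1
        _ ≤ (d - 1) ^ n * q ^ 2 := hbound
    omega
  have hall : ∀ a c : F, ∃ α ∈ S, ∃ t : F, t ^ d + a * t + c = α := by
    intro a c
    by_contra h
    push_neg at h
    have : (a, c) ∈ (Finset.univ : Finset (F × F)).filter
        (fun p => ∀ α ∈ S, ¬ ∃ t : F, t ^ d + p.1 * t + p.2 = α) := by
      simp only [Finset.mem_filter, Finset.mem_univ, true_and]
      intro α hα ⟨t, ht⟩
      exact absurd ht (by simpa using h α hα t)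
    have := Finset.card_pos.mpr ⟨(a, c), this⟩
    omega
  -- S is nonempty
  obtain ⟨α₀, hα₀S, -⟩ := hall 0 0
  refine ⟨S, hScard, ?_⟩
  intro a b c habc
  -- helper: membership in projZeroSet of the curve C_α at an explicit point
  have hd1 : ∃ m : ℕ, d = m + 1 := ⟨d - 1, by omega⟩
  obtain ⟨m, hm⟩ := hd1
  have hdm : d - 1 = m := by omega
  by_cases hb : b = 0
  · -- use the point [0 : 1 : 0]
    set w : Fin 3 → F := ![0, 1, 0] with hw
    have hwne : w ≠ 0 := by
      intro h
      have := congrFun h 1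
      simp [hw] at this
    refine ⟨Projectivization.mk F w hwne, ?_, ?_⟩
    · apply Set.mem_biUnion hα₀S
      intro v hv hmk
      rw [Projectivization.mk_eq_mk_iff] at hmk
      obtain ⟨u, rfl⟩ := hmk
      simp only [map_add, map_sub, map_mul, map_pow, eval_X, eval_C, Pi.smul_apply,
        Units.smul_def, smul_eq_mul]
      rw [hm]
      simp [hw, hdm]
      omega
    · intro v hv hmk
      rw [Projectivization.mk_eq_mk_iff] at hmk
      obtain ⟨u, rfl⟩ := hmk
      simp only [map_add, map_mul, eval_X, eval_C, Pi.smul_apply, Units.smul_def,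
        smul_eq_mul]
      simp [hw, hb]
  · -- use a point (t, t^d - α, 1) on the curve and the line
    obtain ⟨α, hαS, t, ht⟩ := hall (a / b) (c / b)
    set w : Fin 3 → F := ![t, t ^ d - α, 1] with hw
    have hwne : w ≠ 0 := by
      intro h
      have := congrFun h 2
      simp [hw] at this
    refine ⟨Projectivization.mk F w hwne, ?_, ?_⟩
    · apply Set.mem_biUnion hαS
      intro v hv hmk
      rw [Projectivization.mk_eq_mk_iff] at hmk
      obtain ⟨u, rfl⟩ := hmk
      simp only [map_add, map_sub, map_mul, map_pow, eval_X, eval_C, Pi.smul_apply,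
        Units.smul_def, smul_eq_mul]
      simp only [hw]
      simp only [Matrix.cons_val_zero, Matrix.cons_val_one, Matrix.head_cons,
        Matrix.cons_val_two, Matrix.tail_cons]
      rw [hm]
      simp only [Nat.add_sub_cancel]
      ring
    · intro v hv hmk
      rw [Projectivization.mk_eq_mk_iff] at hmk
      obtain ⟨u, rfl⟩ := hmk
      simp only [map_add, map_mul, eval_X, eval_C, Pi.smul_apply, Units.smul_def,
        smul_eq_mul]
      simp only [hw]
      simp only [Matrix.cons_val_zero, Matrix.cons_val_one, Matrix.head_cons,
        Matrix.cons_val_two, Matrix.tail_cons]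
      have ht' : a * t + b * (t ^ d - α) + c = 0 := by
        field_simp at ht
        linear_combination ht
      linear_combination (u : F) * ht'
end
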